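/- arXiv:2111.10694 — 4 statements merged into one kernel-verified Lean document; each statement's English description precedes it below -/
import Mathlib

section
/- A group G is rational (all n-th power maps are bijective for n ≥ 1) if and only if G is local with respect to the inclusion ℤ ↪ ℚ, i.e., the restriction map Hom(ℚ, G) → Hom(ℤ, G) is a bijection. -/
/-- a group `G` is rational (all `n`-th power maps bijective,
`n ≥ 1`) iff `G` is local with respect to the inclusion `ℤ ↪ ℚ`, i.e.
restriction `Hom(ℚ, G) → Hom(ℤ, G)` is a bijection.  Homomorphisms from the
additive groups `ℚ`, `ℤ` to `G` are encoded as `→+ Additive G`. -/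
theorem rational_iff_local_int_rat (G : Type*) [Group G] :
    (∀ n : ℕ, 1 ≤ n → Function.Bijective fun g : G => g ^ n) ↔
      Function.Bijective
        (fun φ : ℚ →+ Additive G => φ.comp (Int.castAddHom ℚ)) := by
  constructor
  · intro H
    have hinj : ∀ n : ℕ, 0 < n → ∀ x y : G, x ^ n = y ^ n → x = y :=
      fun n hn x y h => (H n hn).1 h
    have hsurj : ∀ n : ℕ, 0 < n → ∀ g : G, ∃ x : G, x ^ n = g :=
      fun n hn g => (H n hn).2 g
    -- if x^q = g^p then x commutes with g
    have hcommg : ∀ (g x : G) (p : ℤ) (q : ℕ), 0 < q → x ^ q = g ^ p → Commute g x := by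
      intro g x p q hq hx
      have h1 : (g * x * g⁻¹) ^ q = x ^ q := by
        rw [conj_pow, hx, ((Commute.refl g).zpow_right p).eq, mul_assoc, mul_inv_cancel,
          mul_one]
      have h2 := hinj q hq _ _ h1
      rw [mul_inv_eq_iff_eq_mul] at h2
      exact h2
    -- roots of powers of the same g commute
    have hcomm : ∀ (g x y : G) (p c : ℤ) (q d : ℕ), 0 < q → 0 < d →
        x ^ q = g ^ p → y ^ d = g ^ c → Commute x y := by
      intro g x y p c q d hq hd hx hy
      have hxg : Commute g x := hcommg g x p q hq hx
      have hxgc : Commute x (g ^ c) := (hxg.symm.zpow_right c)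
      have h1 : (x * y * x⁻¹) ^ d = y ^ d := by
        rw [conj_pow, hy, hxgc.eq, mul_assoc, mul_inv_cancel, mul_one]
      have h2 := hinj d hd _ _ h1
      rw [mul_inv_eq_iff_eq_mul] at h2
      exact h2
    constructor
    · -- injectivity of restriction
      intro φ ψ h
      have h' : ∀ m : ℤ, φ ((m : ℚ)) = ψ ((m : ℚ)) := by
        intro m
        have := congrFun (congrArg DFunLike.coe h) m
        simpa using this
      ext q
      have hq : (q.den : ℚ) * q = (q.num : ℚ) := Rat.den_mul_eq_num q
      have hden : q.den • φ q = q.den • ψ q := by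
        rw [← AddMonoidHom.map_nsmul, ← AddMonoidHom.map_nsmul, nsmul_eq_mul, hq, h' q.num,
          ← hq, ← nsmul_eq_mul]
      have := hinj q.den q.pos (Additive.toMul (φ q)) (Additive.toMul (ψ q)) ?_
      · exact Additive.toMul.injective this
      · have : Additive.toMul (q.den • φ q) = Additive.toMul (q.den • ψ q) := by rw [hden]
        simpa [toMul_nsmul] using this
    · -- surjectivity of restriction
      intro f
      set g : G := Additive.toMul (f 1) with hg
      -- root function
      have hR : ∀ r : ℚ, ∃ x : G, x ^ r.den = g ^ r.num := fun r => hsurj r.den r.pos _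
      set R : ℚ → G := fun r => (hR r).choose with hRdef
      have hRspec : ∀ r : ℚ, (R r) ^ r.den = g ^ r.num := fun r => (hR r).choose_spec
      have hadd : ∀ r s : ℚ, R (r + s) = R r * R s := by
        intro r s
        have hc : Commute (R r) (R s) :=
          hcomm g (R r) (R s) r.num s.num r.den s.den r.pos s.pos (hRspec r) (hRspec s)
        set t : ℚ := r + s with ht
        -- integer identity
        have key : t.num * ((r.den : ℤ) * (s.den : ℤ)) =
            (r.num * s.den + s.num * r.den) * t.den := by
          have hr : (r.num : ℚ) = r * r.den := (Rat.mul_den_eq_num r).symm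
          have hs : (s.num : ℚ) = s * s.den := (Rat.mul_den_eq_num s).symm
          have htt : (t.num : ℚ) = t * t.den := (Rat.mul_den_eq_num t).symm
          have : (t.num : ℚ) * ((r.den : ℚ) * (s.den : ℚ)) =
              ((r.num : ℚ) * s.den + (s.num : ℚ) * r.den) * t.den := by
            rw [hr, hs, htt, ht]; ring
          exact_mod_cast this
        apply hinj (t.den * (r.den * s.den)) (by positivity)
        calc R t ^ (t.den * (r.den * s.den))
            = (R t ^ t.den) ^ (r.den * s.den) := by rw [pow_mul]
          _ = (g ^ t.num) ^ ((r.den * s.den : ℕ) : ℤ) := by rw [hRspec t, zpow_natCast]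
          _ = g ^ (t.num * ((r.den : ℤ) * (s.den : ℤ))) := by
              rw [← zpow_mul]; push_cast; ring_nf
          _ = g ^ ((r.num * s.den + s.num * r.den) * t.den) := by rw [key]
          _ = (R r * R s) ^ (t.den * (r.den * s.den)) := by
              rw [mul_comm (t.den) (r.den * s.den), pow_mul, hc.mul_pow]
              have h1 : R r ^ (r.den * s.den) = g ^ (r.num * s.den) := by
                rw [pow_mul, hRspec r, ← zpow_natCast (g ^ r.num) s.den, ← zpow_mul]
              have h2 : R s ^ (r.den * s.den) = g ^ (s.num * r.den) := by
                rw [mul_comm, pow_mul, hRspec s, ← zpow_natCast (g ^ s.num) r.den, ← zpow_mul]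
              rw [h1, h2, ← zpow_add, ← zpow_natCast (g ^ _) t.den, ← zpow_mul]
      refine ⟨AddMonoidHom.mk' (fun r => Additive.ofMul (R r)) (by
        intro r s
        rw [hadd r s]
        rfl), ?_⟩
      apply AddMonoidHom.ext_int
      simp only [AddMonoidHom.comp_apply, Int.coe_castAddHom, Int.cast_one,
        AddMonoidHom.mk'_apply]
      have h1 : R 1 = g := by
        have := hRspec 1
        simpa using this
      rw [h1, hg]
      simp
  · intro hB
    intro n hn
    have hn' : (n : ℚ) ≠ 0 := by positivity
    constructor
    · intro a b hab
      simp only at hab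
      obtain ⟨ψa, hψa⟩ := hB.2 (zmultiplesHom (Additive G) (Additive.ofMul a))
      obtain ⟨ψb, hψb⟩ := hB.2 (zmultiplesHom (Additive G) (Additive.ofMul b))
      -- compose with multiplication by n
      have hmul : ∀ (ψ : ℚ →+ Additive G),
          ∃ χ : ℚ →+ Additive G, ∀ r : ℚ, χ r = ψ ((n : ℚ) * r) :=
        fun ψ => ⟨ψ.comp (AddMonoidHom.mulLeft (n : ℚ)), fun r => rfl⟩
      obtain ⟨χa, hχa⟩ := hmul ψa
      obtain ⟨χb, hχb⟩ := hmul ψb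
      have hcast : ∀ (ψ : ℚ →+ Additive G) (c : G), ψ.comp (Int.castAddHom ℚ) =
          zmultiplesHom (Additive G) (Additive.ofMul c) → ∀ m : ℤ, ψ ((m : ℚ)) =
          Additive.ofMul (c ^ m) := by
        intro ψ c hψ m
        have := congrFun (congrArg DFunLike.coe hψ) m
        simpa [zmultiplesHom, ofMul_zpow] using this
      have heq : χa.comp (Int.castAddHom ℚ) = χb.comp (Int.castAddHom ℚ) := by
        apply AddMonoidHom.ext_int
        set m : ℤ := 1 with hm1
        simp only [AddMonoidHom.comp_apply, Int.coe_castAddHom, hχa, hχb]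
        have h1 : (n : ℚ) * (m : ℚ) = ((n * m : ℤ) : ℚ) := by push_cast; ring
        rw [h1, hcast ψa a hψa, hcast ψb b hψb]
        have : a ^ (n * m : ℤ) = b ^ (n * m : ℤ) := by
          rw [hm1, mul_one, zpow_natCast, zpow_natCast, hab]
        rw [this]
      have hχ := hB.1 heq
      have h1 : χa ((n : ℚ)⁻¹) = χb ((n : ℚ)⁻¹) := by rw [hχ]
      rw [hχa, hχb, mul_inv_cancel₀ hn'] at h1
      have h2 : ψa ((1 : ℤ) : ℚ) = ψb ((1 : ℤ) : ℚ) := by simpa using h1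
      rw [hcast ψa a hψa, hcast ψb b hψb] at h2
      simpa using Additive.ofMul.injective h2
    · intro g
      obtain ⟨ψ, hψ⟩ := hB.2 (zmultiplesHom (Additive G) (Additive.ofMul g))
      refine ⟨Additive.toMul (ψ ((n : ℚ)⁻¹)), ?_⟩
      simp only []
      have h1 : n • ψ ((n : ℚ)⁻¹) = ψ 1 := by
        rw [← AddMonoidHom.map_nsmul, nsmul_eq_mul, mul_inv_cancel₀ hn']
      have h2 : ψ ((1 : ℤ) : ℚ) = Additive.ofMul g := by
        have := congrFun (congrArg DFunLike.coe hψ) (1 : ℤ)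
        simpa [zmultiplesHom] using this
      have h3 : ψ 1 = Additive.ofMul g := by simpa using h2
      calc (Additive.toMul (ψ ((n:ℚ)⁻¹))) ^ n = Additive.toMul (n • ψ ((n:ℚ)⁻¹)) := by
            simp [toMul_nsmul]
        _ = g := by rw [h1, h3]; rfl
end

section
/- A group G is local with respect to the inclusion ℤ ↪ ℚ if and only if G is local with respect to all multiplication-by-n maps ·n : ℤ → ℤ for n ≥ 1 (i.e., the map Hom(ℤ, G) → Hom(ℤ, G) induced by precomposition with ·n is a bijection for every n ≥ 1). -/
namespace LocalRatAux5

variable {G : Type*} [Group G]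

/-- `G` has bijective `n`-th power maps for all `n ≥ 1`. -/
abbrev PB (G : Type*) [Group G] : Prop :=
  ∀ n : ℕ, 1 ≤ n → Function.Bijective (fun g : G => g ^ n)

lemma commute_root (hP : PB G) {n : ℕ} (hn : 1 ≤ n) {g h : G}
    (hc : Commute h (g ^ n)) : Commute h g := by
  have h1 : (h * g * h⁻¹) ^ n = g ^ n := by
    rw [conj_pow, hc.eq]
    group
  have h2 : h * g * h⁻¹ = g := (hP n hn).injective h1
  have h3 : h * g = g * h := by
    conv_rhs => rw [← h2]
    group
  exact h3

noncomputable def F (hP : PB G) (g : G) (x : ℚ) : G :=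
  Function.surjInv (hP x.den x.pos).surjective (g ^ x.num)

lemma F_spec (hP : PB G) (g : G) (x : ℚ) : F hP g x ^ x.den = g ^ x.num :=
  Function.surjInv_eq _ _

lemma F_unique (hP : PB G) (g : G) (x : ℚ) {y : G} (hy : y ^ x.den = g ^ x.num) :
    y = F hP g x := by
  apply (hP x.den x.pos).injective
  show y ^ x.den = F hP g x ^ x.den
  rw [hy, F_spec]

lemma commute_g_F (hP : PB G) (g : G) (x : ℚ) : Commute g (F hP g x) :=
  commute_root hP x.pos (by rw [F_spec]; exact (Commute.refl g).zpow_right x.num)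

lemma commute_F (hP : PB G) (g : G) (x y : ℚ) :
    Commute (F hP g x) (F hP g y) :=
  commute_root hP y.pos (by rw [F_spec]; exact ((commute_g_F hP g x).symm).zpow_right y.num)

lemma F_pow_mul (hP : PB G) (g : G) (x : ℚ) (k : ℕ) :
    F hP g x ^ (x.den * k) = g ^ (x.num * (k : ℤ)) := by
  rw [pow_mul, F_spec, ← zpow_natCast (g ^ x.num) k, ← zpow_mul]

lemma hnum (z : ℚ) : (z.num : ℚ) = z * z.den := by
  have h : (z.den : ℚ) ≠ 0 := by
    exact_mod_cast z.pos.ne'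
  exact (div_eq_iff h).mp (Rat.num_div_den z)

lemma F_add (hP : PB G) (g : G) (x y : ℚ) :
    F hP g (x + y) = F hP g x * F hP g y := by
  have key : (x + y).num * ((x.den : ℤ) * y.den)
      = x.num * (((x + y).den : ℤ) * y.den) + y.num * (((x + y).den : ℤ) * x.den) := by
    have hq : ((x + y).num : ℚ) * ((x.den : ℚ) * y.den)
        = (x.num : ℚ) * (((x + y).den : ℚ) * y.den)
          + (y.num : ℚ) * (((x + y).den : ℚ) * x.den) := by
      rw [hnum (x + y), hnum x, hnum y]; ring
    exact_mod_cast hq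
  symm
  apply F_unique
  apply (hP (x.den * y.den) (Nat.mul_pos x.pos y.pos)).injective
  show ((F hP g x * F hP g y) ^ (x + y).den) ^ (x.den * y.den)
      = (g ^ (x + y).num) ^ (x.den * y.den)
  have e1 : F hP g x ^ ((x + y).den * (x.den * y.den))
      = g ^ (x.num * ((((x + y).den * y.den : ℕ)) : ℤ)) := by
    rw [show (x + y).den * (x.den * y.den) = x.den * ((x + y).den * y.den) from by ring]
    exact F_pow_mul hP g x _
  have e2 : F hP g y ^ ((x + y).den * (x.den * y.den))
      = g ^ (y.num * ((((x + y).den * x.den : ℕ)) : ℤ)) := by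
    rw [show (x + y).den * (x.den * y.den) = y.den * ((x + y).den * x.den) from by ring]
    exact F_pow_mul hP g y _
  rw [← pow_mul, (commute_F hP g x y).mul_pow, e1, e2, ← zpow_natCast (g ^ (x + y).num),
    ← zpow_mul, ← zpow_add]
  congr 1
  push_cast
  push_cast at key
  linarith

lemma F_int (hP : PB G) (g : G) (k : ℤ) : F hP g (k : ℚ) = g ^ k := by
  symm
  apply F_unique
  rw [Rat.den_intCast, Rat.num_intCast, pow_one]

noncomputable def psi (hP : PB G) (g : G) : ℚ →+ Additive G :=
  AddMonoidHom.mk' (fun x => Additive.ofMul (F hP g x)) fun x y => by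
    show Additive.ofMul (F hP g (x + y))
        = Additive.ofMul (F hP g x) + Additive.ofMul (F hP g y)
    rw [F_add hP g x y, ofMul_mul]

lemma smul_bij_iff (n : ℕ) :
    Function.Bijective (fun a : Additive G => n • a)
      ↔ Function.Bijective (fun g : G => g ^ n) := by
  constructor
  · intro h
    have e : (fun g : G => g ^ n)
        = Additive.toMul ∘ (fun a : Additive G => n • a) ∘ Additive.ofMul := by
      funext g
      simp [toMul_nsmul]
    rw [e]
    exact (Additive.toMul.bijective.comp h).comp Additive.ofMul.bijective
  · intro h
    have e : (fun a : Additive G => n • a)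
        = Additive.ofMul ∘ (fun g : G => g ^ n) ∘ Additive.toMul := by
      funext a
      simp [← toMul_nsmul]
    rw [e]
    exact (Additive.ofMul.bijective.comp h).comp Additive.toMul.bijective

lemma psi_comp (hP : PB G) (g : G) :
    (psi hP g).comp (Int.castAddHom ℚ) = zmultiplesHom (Additive G) (Additive.ofMul g) := by
  apply AddMonoidHom.ext_int
  show Additive.ofMul (F hP g (((1 : ℤ) : ℚ))) = (1 : ℤ) • Additive.ofMul g
  rw [F_int, zpow_one, one_zsmul]

lemma hev {a : Additive G} {ψ : ℚ →+ Additive G}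
    (hψ : ψ.comp (Int.castAddHom ℚ) = zmultiplesHom (Additive G) a) (k : ℤ) :
    ψ ((k : ℚ)) = k • a := by
  have := DFunLike.congr_fun hψ k
  simpa using this

lemma pb_of_res
    (hL : Function.Bijective (fun φ : ℚ →+ Additive G => φ.comp (Int.castAddHom ℚ))) :
    PB G := by
  intro n hn
  have hn0 : ((n : ℚ)) ≠ 0 := by
    exact_mod_cast Nat.one_le_iff_ne_zero.mp hn
  constructor
  · intro g h hgh0
    have hgh : g ^ n = h ^ n := hgh0
    obtain ⟨ψg, hψg⟩ := hL.surjective (zmultiplesHom _ (Additive.ofMul g))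
    obtain ⟨ψh, hψh⟩ := hL.surjective (zmultiplesHom _ (Additive.ofMul h))
    have hχ : (ψg.comp (AddMonoidHom.mulLeft (n : ℚ))).comp (Int.castAddHom ℚ)
        = (ψh.comp (AddMonoidHom.mulLeft (n : ℚ))).comp (Int.castAddHom ℚ) := by
      apply AddMonoidHom.ext_int
      show ψg ((n : ℚ) * ((1 : ℤ) : ℚ)) = ψh ((n : ℚ) * ((1 : ℤ) : ℚ))
      have hc : ((n : ℚ) * ((1 : ℤ) : ℚ)) = (((n : ℤ)) : ℚ) := by push_cast; ring
      rw [hc, hev hψg, hev hψh]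
      show ((n : ℤ)) • Additive.ofMul g = ((n : ℤ)) • Additive.ofMul h
      rw [← ofMul_zpow, ← ofMul_zpow, zpow_natCast, zpow_natCast, hgh]
    have hχeq := hL.injective hχ
    have hpt : ∀ x : ℚ, ψg x = ψh x := by
      intro x
      have hx : (n : ℚ) * (x / n) = x := by field_simp
      have hthis := DFunLike.congr_fun hχeq (x / n)
      simp only [AddMonoidHom.comp_apply] at hthis
      rw [show (AddMonoidHom.mulLeft ((n : ℚ))) (x / n) = (n : ℚ) * (x / n) from rfl,
        hx] at hthis
      exact hthis
    have h1 := hev hψg 1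
    have h2 := hev hψh 1
    simp only [Int.cast_one, one_zsmul] at h1 h2
    have : Additive.ofMul g = Additive.ofMul h := by rw [← h1, hpt, h2]
    exact this
  · intro g
    obtain ⟨ψ, hψ⟩ := hL.surjective (zmultiplesHom _ (Additive.ofMul g))
    refine ⟨Additive.toMul (ψ (1 / n)), ?_⟩
    show Additive.toMul (ψ (1 / n)) ^ n = g
    have hs : (n : ℕ) • ((1 / n : ℚ)) = ((1 : ℤ) : ℚ) := by
      push_cast [nsmul_eq_mul]
      field_simp
    rw [← toMul_nsmul, ← map_nsmul, hs, hev hψ 1, one_zsmul]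
    rfl

lemma comp_eq (n : ℕ) :
    (fun φ : ℤ →+ Additive G => φ.comp (n • AddMonoidHom.id ℤ))
      = fun φ => zmultiplesHom (Additive G) (n • ((zmultiplesHom (Additive G)).symm φ)) := by
  funext φ
  apply AddMonoidHom.ext_int
  show φ ((n • AddMonoidHom.id ℤ) 1) = (1 : ℤ) • (n • ((zmultiplesHom (Additive G)).symm φ))
  rw [one_zsmul, zmultiplesHom_symm_apply]
  show φ (n • ((1 : ℤ))) = n • φ 1
  rw [map_nsmul]

end LocalRatAux5

open LocalRatAux5 in
/-- a group `G` is local with respect to `ℤ ↪ ℚ` iff it is local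
with respect to every multiplication-by-`n` map `·n : ℤ → ℤ` (`n ≥ 1`). -/
theorem local_rat_iff_local_mul_n (G : Type*) [Group G] :
    Function.Bijective
        (fun φ : ℚ →+ Additive G => φ.comp (Int.castAddHom ℚ)) ↔
      (∀ n : ℕ, 1 ≤ n →
        Function.Bijective
          (fun φ : ℤ →+ Additive G => φ.comp (n • AddMonoidHom.id ℤ))) := by
  constructor
  · intro hL n hn
    have hP : PB G := pb_of_res hL
    rw [comp_eq]
    exact ((zmultiplesHom (Additive G)).bijective.comp
      ((smul_bij_iff n).mpr (hP n hn))).comp (zmultiplesHom (Additive G)).symm.bijective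
  · intro hR
    have hP : PB G := by
      intro n hn
      have hs : Function.Bijective (fun a : Additive G => n • a) := by
        have h2 : (fun a : Additive G => n • a)
            = fun a => (zmultiplesHom (Additive G)).symm
                ((fun φ : ℤ →+ Additive G => φ.comp (n • AddMonoidHom.id ℤ))
                  (zmultiplesHom (Additive G) a)) := by
          funext a
          rw [comp_eq]
          simp
        rw [h2]
        exact ((zmultiplesHom (Additive G)).symm.bijective.comp (hR n hn)).comp
          (zmultiplesHom (Additive G)).bijective
      exact (smul_bij_iff n).mp hs
    constructor
    · intro ψ₁ ψ₂ hcomp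
      have hcomp' : ψ₁.comp (Int.castAddHom ℚ) = ψ₂.comp (Int.castAddHom ℚ) := hcomp
      ext x
      apply ((smul_bij_iff x.den).mpr (hP x.den x.pos)).injective
      show x.den • ψ₁ x = x.den • ψ₂ x
      have hx : (x.den : ℕ) • x = ((x.num : ℚ)) := by
        rw [nsmul_eq_mul, hnum x]
        ring
      rw [← map_nsmul, ← map_nsmul, hx]
      have e1 : ψ₁ ((x.num : ℚ)) = (ψ₁.comp (Int.castAddHom ℚ)) x.num := by simp
      have e2 : ψ₂ ((x.num : ℚ)) = (ψ₂.comp (Int.castAddHom ℚ)) x.num := by simp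
      rw [e1, e2, hcomp']
    · intro φ
      refine ⟨psi hP (Additive.toMul (φ 1)), ?_⟩
      show (psi hP (Additive.toMul (φ 1))).comp (Int.castAddHom ℚ) = φ
      rw [psi_comp]
      apply AddMonoidHom.ext_int
      show (1 : ℤ) • (Additive.ofMul (Additive.toMul (φ 1))) = φ 1
      rw [one_zsmul]
      rfl
end

section
/- If G is a group whose ordinary and rational lower central series are as above, then for each n the inclusion G_n ⊆ G_n^ℚ induces an isomorphism (G_n/G_{n+1}) ⊗ ℚ ≅ (G_n^ℚ/G_{n+1}^ℚ) ⊗ ℚ of ℚ-vector spaces. -/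
open Subgroup
open scoped commutatorElement

universe u

section Aux

variable {G : Type u} [Group G]

private lemma lcs_succ_eq (n : ℕ) :
    (⊤ : Subgroup G).lowerCentralSeries (n + 1) = ⁅(⊤ : Subgroup G).lowerCentralSeries n, (⊤ : Subgroup G)⁆ := rfl

/-- The lower central series maps onto the lower central series of a quotient. -/
private lemma lcs_map_surj {H : Type*} [Group H] (f : G →* H) (hf : Function.Surjective f)
    (n : ℕ) : Subgroup.map f ((⊤ : Subgroup G).lowerCentralSeries n) = (⊤ : Subgroup H).lowerCentralSeries n := by
  induction n with
  | zero => simpa using Subgroup.map_top_of_surjective f hf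
  | succ n ih =>
    rw [lcs_succ_eq, lcs_succ_eq, Subgroup.map_commutator, ih,
      Subgroup.map_top_of_surjective f hf]

/-- The commutator identity `⁅u^m, g⁆ = ⁅u, g⁆^m` when `⁅H, ⊤⁆` is central and `u ∈ H`. -/
private lemma comm_pow {H : Subgroup G}
    (hc : ∀ z ∈ ⁅H, (⊤ : Subgroup G)⁆, ∀ w : G, z * w = w * z)
    {u : G} (hu : u ∈ H) (g : G) : ∀ m : ℕ, ⁅u ^ m, g⁆ = ⁅u, g⁆ ^ m := by
  intro m
  induction m with
  | zero => simp
  | succ m ih =>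
    have h1 : ⁅u ^ (m + 1), g⁆ = u * ⁅u ^ m, g⁆ * u⁻¹ * ⁅u, g⁆ := by
      simp only [commutatorElement_def, pow_succ']
      group
    have h2 : ⁅u ^ m, g⁆ ∈ ⁅H, (⊤ : Subgroup G)⁆ :=
      commutator_mem_commutator (pow_mem hu m) (mem_top g)
    have h3 : u * ⁅u ^ m, g⁆ * u⁻¹ = ⁅u ^ m, g⁆ := by
      rw [← hc _ h2 u]; group
    rw [h1, h3, ih, ← pow_succ]

/-- A nilpotent group generated by torsion elements is torsion. -/
private lemma torGen :
    ∀ (c : ℕ) (G : Type u) (_ : Group G) (A : Set G),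
      (⊤ : Subgroup G).lowerCentralSeries c = ⊥ → Subgroup.closure A = ⊤ →
      (∀ a ∈ A, ∃ s : ℕ, 1 ≤ s ∧ a ^ s = 1) →
      ∀ x : G, ∃ k : ℕ, 1 ≤ k ∧ x ^ k = 1 := by
  intro c
  induction c with
  | zero =>
    intro G _ A hbot _ _ x
    have hx : x ∈ (⊤ : Subgroup G).lowerCentralSeries 0 := mem_top x
    rw [hbot] at hx
    exact ⟨1, le_refl 1, by simpa using hx⟩
  | succ c ih =>
    intro G _ A hbot hAtop hAtor x
    match c, hbot, ih with
    | 0, hbot, _ =>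
      -- G is abelian
      have hab : ∀ a b : G, a * b = b * a := by
        intro a b
        have : ⁅a, b⁆ ∈ (⊤ : Subgroup G).lowerCentralSeries 1 :=
          commutator_mem_commutator (mem_top a) (mem_top b)
        rw [hbot] at this
        exact commutatorElement_eq_one_iff_mul_comm.mp (by simpa using this)
      have hx : x ∈ Subgroup.closure A := by rw [hAtop]; exact mem_top x
      induction hx using closure_induction with
      | mem a ha => exact hAtor a ha
      | one => exact ⟨1, le_refl 1, one_pow 1⟩
      | mul a b _ _ hpa hpb =>
        obtain ⟨s, hs, has⟩ := hpa
        obtain ⟨t, ht, hbt⟩ := hpb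
        refine ⟨s * t, Nat.one_le_iff_ne_zero.mpr (Nat.mul_ne_zero (by omega) (by omega)), ?_⟩
        rw [Commute.mul_pow (hab a b), pow_mul a, has, one_pow, one_mul, mul_comm s t,
          pow_mul b, hbt, one_pow]
      | inv a _ hpa =>
        obtain ⟨s, hs, has⟩ := hpa
        exact ⟨s, hs, by rw [inv_pow, has, inv_one]⟩
    | (d + 1), hbot, ih =>
      -- N := lcs G (d+1) is central since lcs G (d+2) = ⊥
      set N := (⊤ : Subgroup G).lowerCentralSeries (d + 1) with hN
      have hcen : ∀ z ∈ N, ∀ w : G, z * w = w * z := by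
        intro z hz w
        have : ⁅z, w⁆ ∈ (⊤ : Subgroup G).lowerCentralSeries (d + 2) :=
          commutator_mem_commutator hz (mem_top w)
        rw [hbot] at this
        exact commutatorElement_eq_one_iff_mul_comm.mp (by simpa using this)
      let π := QuotientGroup.mk' N
      have hsur : Function.Surjective π := QuotientGroup.mk'_surjective N
      -- the quotient satisfies the inductive hypothesis
      have hbot' : (⊤ : Subgroup (G ⧸ N)).lowerCentralSeries (d + 1) = ⊥ := by
        rw [← lcs_map_surj π hsur, ← hN]
        exact QuotientGroup.map_mk'_self N
      have hAtop' : Subgroup.closure (π '' A) = ⊤ := by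
        rw [← MonoidHom.map_closure, hAtop]
        exact Subgroup.map_top_of_surjective π hsur
      have hAtor' : ∀ a ∈ π '' A, ∃ s : ℕ, 1 ≤ s ∧ a ^ s = 1 := by
        rintro _ ⟨a, ha, rfl⟩
        obtain ⟨s, hs, has⟩ := hAtor a ha
        exact ⟨s, hs, by rw [← map_pow, has, map_one]⟩
      have hquot : ∀ u : G, ∃ k : ℕ, 1 ≤ k ∧ u ^ k ∈ N := by
        intro u
        obtain ⟨k, hk, hku⟩ := ih (G ⧸ N) inferInstance (π '' A) hbot' hAtop' hAtor' (π u)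
        exact ⟨k, hk, (QuotientGroup.eq_one_iff _).mp (by rw [← map_pow] at hku; exact hku)⟩
      -- every element of N is torsion
      have hNtor : ∀ z ∈ N, ∃ j : ℕ, 1 ≤ j ∧ z ^ j = 1 := by
        have hNc : N = Subgroup.closure
            {g : G | ∃ g₁ ∈ (⊤ : Subgroup G).lowerCentralSeries d, ∃ g₂ ∈ (⊤ : Subgroup G), ⁅g₁, g₂⁆ = g} := by
          rw [hN, lcs_succ_eq, Subgroup.commutator_def]
        intro z hz
        rw [hNc] at hz
        have key : z ∈ N ∧ ∃ j : ℕ, 1 ≤ j ∧ z ^ j = 1 := by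
          induction hz using closure_induction with
          | mem a ha =>
            obtain ⟨g₁, hg₁, g₂, -, rfl⟩ := ha
            have hmem : ⁅g₁, g₂⁆ ∈ N := by
              rw [hN, lcs_succ_eq]
              exact commutator_mem_commutator hg₁ (mem_top g₂)
            refine ⟨hmem, ?_⟩
            obtain ⟨k, hk, hkN⟩ := hquot g₁
            refine ⟨k, hk, ?_⟩
            have hcc : ∀ z' ∈ ⁅(⊤ : Subgroup G).lowerCentralSeries d, (⊤ : Subgroup G)⁆, ∀ w : G,
                z' * w = w * z' := by
              intro z' hz' w
              exact hcen z' (by rw [hN, lcs_succ_eq]; exact hz') w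
            rw [← comm_pow hcc hg₁ g₂ k]
            exact commutatorElement_eq_one_iff_mul_comm.mpr (hcen _ hkN g₂)
          | one => exact ⟨one_mem N, 1, le_refl 1, one_pow 1⟩
          | mul a b _ _ hpa hpb =>
            obtain ⟨haN, s, hs, has⟩ := hpa
            obtain ⟨hbN, t, ht, hbt⟩ := hpb
            refine ⟨mul_mem haN hbN, s * t, Nat.one_le_iff_ne_zero.mpr (Nat.mul_ne_zero (by omega) (by omega)), ?_⟩
            rw [Commute.mul_pow (hcen a haN b), pow_mul a, has, one_pow, one_mul, mul_comm s t,
              pow_mul b, hbt, one_pow]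
          | inv a _ hpa =>
            obtain ⟨haN, s, hs, has⟩ := hpa
            exact ⟨inv_mem haN, s, hs, by rw [inv_pow, has, inv_one]⟩
        exact key.2
      obtain ⟨k, hk, hkN⟩ := hquot x
      obtain ⟨j, hj, hjz⟩ := hNtor _ hkN
      exact ⟨k * j, Nat.one_le_iff_ne_zero.mpr (Nat.mul_ne_zero (by omega) (by omega)), by rw [pow_mul, hjz]⟩

/-- Products of torsion elements in a nilpotent group are torsion. -/
private lemma torsion_mul {c : ℕ} (hbot : (⊤ : Subgroup G).lowerCentralSeries c = ⊥) {a b : G}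
    (ha : ∃ s : ℕ, 1 ≤ s ∧ a ^ s = 1) (hb : ∃ t : ℕ, 1 ≤ t ∧ b ^ t = 1) :
    ∃ w : ℕ, 1 ≤ w ∧ (a * b) ^ w = 1 := by
  set H := Subgroup.closure ({a, b} : Set G) with hH
  have haH : a ∈ H := subset_closure (by simp)
  have hbH : b ∈ H := subset_closure (by simp)
  have hHbot : (⊤ : Subgroup H).lowerCentralSeries c = ⊥ := by
    rw [eq_bot_iff]
    intro x hx
    have h1 : H.subtype x ∈ (⊥ : Subgroup G) := by
      rw [← hbot]
      exact Subgroup.lowerCentralSeries_map_subtype_le H c ⟨x, hx, rfl⟩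
    simp only [mem_bot] at h1 ⊢
    exact Subtype.ext h1
  have htop : Subgroup.closure (((↑) : H → G) ⁻¹' ({a, b} : Set G)) = ⊤ :=
    Subgroup.closure_closure_coe_preimage
  have hgens : ∀ y ∈ (((↑) : H → G) ⁻¹' ({a, b} : Set G)),
      ∃ s : ℕ, 1 ≤ s ∧ y ^ s = 1 := by
    rintro y hy
    rcases hy with hya | hyb
    · obtain ⟨s, hs, has⟩ := ha
      exact ⟨s, hs, by ext; simpa [hya] using has⟩
    · obtain ⟨t, ht, hbt⟩ := hb
      exact ⟨t, ht, by ext; simpa [Set.mem_singleton_iff.mp hyb] using hbt⟩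
  obtain ⟨w, hw, hab⟩ :=
    torGen c H inferInstance _ hHbot htop hgens ⟨a * b, mul_mem haH hbH⟩
  refine ⟨w, hw, ?_⟩
  have := congrArg (H.subtype) hab
  simpa using this

/-- The torsion subgroup of a nilpotent group. -/
private def torsionSG {c : ℕ} (hbot : (⊤ : Subgroup G).lowerCentralSeries c = ⊥) : Subgroup G where
  carrier := {x : G | ∃ k : ℕ, 1 ≤ k ∧ x ^ k = 1}
  one_mem' := ⟨1, le_refl 1, one_pow 1⟩
  mul_mem' := fun ha hb => torsion_mul hbot ha hb
  inv_mem' := by rintro x ⟨k, hk, h⟩; exact ⟨k, hk, by rw [inv_pow, h, inv_one]⟩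

private lemma torsionSG_normal {c : ℕ} (hbot : (⊤ : Subgroup G).lowerCentralSeries c = ⊥) :
    (torsionSG hbot).Normal := by
  constructor
  rintro x ⟨k, hk, h⟩ g
  exact ⟨k, hk, by rw [conj_pow, h, mul_one, mul_inv_cancel]⟩

/-- In a torsion-free nilpotent group, an element whose power is central is central. -/
private lemma pow_central_central {K : Type u} [Group K]
    (htf : ∀ x : K, ∀ k : ℕ, 1 ≤ k → x ^ k = 1 → x = 1)
    (hnil : ∃ n, Subgroup.upperCentralSeries K n = ⊤)
    {q : K} {m : ℕ} (hm : 1 ≤ m) (hq : q ^ m ∈ Subgroup.center K) :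
    q ∈ Subgroup.center K := by
  have TFQ : ∀ j : ℕ, ∀ x : K, x ^ m ∈ Subgroup.upperCentralSeries K j →
      x ∈ Subgroup.upperCentralSeries K (j + 1) → x ∈ Subgroup.upperCentralSeries K j := by
    intro j
    induction j with
    | zero =>
      intro x hxm _
      rw [Subgroup.upperCentralSeries_zero] at hxm ⊢
      rw [mem_bot] at hxm ⊢
      exact htf x m hm hxm
    | succ j ih =>
      intro x hxm hx1
      rw [Subgroup.mem_upperCentralSeries_succ_iff]
      intro g
      let π := QuotientGroup.mk' (Subgroup.upperCentralSeries K j)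
      have hker : ∀ z : K, z ∈ Subgroup.upperCentralSeries K j → π z = 1 := by
        intro z hz
        exact (QuotientGroup.eq_one_iff _).mpr hz
      -- ⁅x^t, g⁆ ≡ ⁅x,g⁆^t mod Z_j
      have claim : ∀ t : ℕ, π ⁅x ^ t, g⁆ = (π ⁅x, g⁆) ^ t := by
        intro t
        induction t with
        | zero => simp
        | succ t iht =>
          have h1 : ⁅x ^ (t + 1), g⁆ = x * ⁅x ^ t, g⁆ * x⁻¹ * ⁅x, g⁆ := by
            simp only [commutatorElement_def, pow_succ']
            group
          have h2 : ⁅x ^ t, g⁆ ∈ Subgroup.upperCentralSeries K (j + 1) := by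
            have := (Subgroup.mem_upperCentralSeries_succ_iff).mp (pow_mem hx1 t) g
            simpa [commutatorElement_def] using this
          have h3 : ⁅x, ⁅x ^ t, g⁆⁆ ∈ Subgroup.upperCentralSeries K j := by
            have := (Subgroup.mem_upperCentralSeries_succ_iff).mp h2 x
            have h4 : ⁅⁅x ^ t, g⁆, x⁆ ∈ Subgroup.upperCentralSeries K j := by
              simpa [commutatorElement_def] using this
            have h5 : ⁅x, ⁅x ^ t, g⁆⁆ = ⁅⁅x ^ t, g⁆, x⁆⁻¹ := by
              rw [commutatorElement_inv]
            rw [h5]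
            exact inv_mem h4
          have h6 : π x * π ⁅x ^ t, g⁆ * (π x)⁻¹ = π ⁅x ^ t, g⁆ := by
            have h7 : π ⁅x, ⁅x ^ t, g⁆⁆ = 1 := hker _ h3
            rw [map_commutatorElement] at h7
            have h8 := commutatorElement_eq_one_iff_mul_comm.mp h7
            rw [h8]; group
          rw [h1]
          rw [map_mul, map_mul, map_mul, map_inv, h6, iht, ← pow_succ]
      have h9 : π (⁅x, g⁆ ^ m) = 1 := by
        rw [map_pow, ← claim m]
        apply hker
        have := (Subgroup.mem_upperCentralSeries_succ_iff).mp hxm g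
        simpa [commutatorElement_def] using this
      have h10 : ⁅x, g⁆ ^ m ∈ Subgroup.upperCentralSeries K j := (QuotientGroup.eq_one_iff _).mp h9
      have h11 : ⁅x, g⁆ ∈ Subgroup.upperCentralSeries K (j + 1) := by
        have := (Subgroup.mem_upperCentralSeries_succ_iff).mp hx1 g
        simpa [commutatorElement_def] using this
      have h12 := ih ⁅x, g⁆ h10 h11
      simpa [commutatorElement_def] using h12
  obtain ⟨n, hn⟩ := hnil
  have hZ1 : q ^ m ∈ Subgroup.upperCentralSeries K 1 := by rw [Subgroup.upperCentralSeries_one]; exact hq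
  have desc : ∀ j : ℕ, q ∈ Subgroup.upperCentralSeries K (j + 1) → q ∈ Subgroup.upperCentralSeries K 1 := by
    intro j
    induction j with
    | zero => exact id
    | succ j ih =>
      intro hqj
      apply ih
      apply TFQ (j + 1) q _ hqj
      exact Subgroup.upperCentralSeries_mono K (Nat.one_le_iff_ne_zero.mpr (by omega)) hZ1
  have hqn1 : q ∈ Subgroup.upperCentralSeries K (n + 1) := by
    have : Subgroup.upperCentralSeries K (n + 1) = ⊤ :=
      eq_top_iff.mpr (hn ▸ Subgroup.upperCentralSeries_mono K (Nat.le_succ n))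
    rw [this]; exact mem_top q
  rw [← Subgroup.upperCentralSeries_one]
  exact desc n hqn1

/-- In a nilpotent group, the commutator of an element with power-central element is torsion. -/
private lemma comm_torsion_of_pow_central {c : ℕ} (hbot : (⊤ : Subgroup G).lowerCentralSeries c = ⊥)
    {q : G} {m : ℕ} (hm : 1 ≤ m) (hq : q ^ m ∈ Subgroup.center G) (g : G) :
    ∃ j : ℕ, 1 ≤ j ∧ ⁅q, g⁆ ^ j = 1 := by
  let T : Subgroup G := torsionSG hbot
  haveI : T.Normal := torsionSG_normal hbot
  let π := QuotientGroup.mk' T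
  have hsur : Function.Surjective π := QuotientGroup.mk'_surjective T
  have htf : ∀ x : G ⧸ T, ∀ k : ℕ, 1 ≤ k → x ^ k = 1 → x = 1 := by
    intro x k hk hxk
    obtain ⟨y, rfl⟩ := hsur x
    rw [← map_pow] at hxk
    obtain ⟨j, hj, hyj⟩ := (QuotientGroup.eq_one_iff _).mp hxk
    apply (QuotientGroup.eq_one_iff _).mpr
    exact ⟨k * j, Nat.one_le_iff_ne_zero.mpr (Nat.mul_ne_zero (by omega) (by omega)), by rw [pow_mul, hyj]⟩
  have hnil : ∃ n, Subgroup.upperCentralSeries (G ⧸ T) n = ⊤ := by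
    have h1 : Group.IsNilpotent (G ⧸ T) := by
      rw [Subgroup.nilpotent_iff_lowerCentralSeries]
      exact ⟨c, by rw [← lcs_map_surj π hsur c, hbot, Subgroup.map_bot]⟩
    haveI := h1
    exact Group.IsNilpotent.nilpotent _
  have hqc : (π q) ^ m ∈ Subgroup.center (G ⧸ T) := by
    rw [← map_pow]
    rw [Subgroup.mem_center_iff]
    intro w
    obtain ⟨y, rfl⟩ := hsur w
    rw [← map_mul, ← map_mul, (Subgroup.mem_center_iff.mp hq y)]
  have hcentral := pow_central_central htf hnil hm hqc
  have h1 : π ⁅q, g⁆ = 1 := by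
    rw [map_commutatorElement]
    exact commutatorElement_eq_one_iff_mul_comm.mpr
      ((Subgroup.mem_center_iff.mp hcentral (π g)).symm)
  obtain ⟨j, hj, hjT⟩ := (QuotientGroup.eq_one_iff _).mp h1
  exact ⟨j, hj, hjT⟩

/-- Key commutator lemma: if `q^m ∈ γ_n` then `⁅q,g⁆` has a power in `γ_{n+1}`. -/
private lemma comm_pow_in_lcs {n : ℕ} {q : G} {m : ℕ} (hm : 1 ≤ m)
    (hq : q ^ m ∈ (⊤ : Subgroup G).lowerCentralSeries n) (g : G) :
    ∃ j : ℕ, 1 ≤ j ∧ ⁅q, g⁆ ^ j ∈ (⊤ : Subgroup G).lowerCentralSeries (n + 1) := by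
  set N := (⊤ : Subgroup G).lowerCentralSeries (n + 1) with hN
  let π := QuotientGroup.mk' N
  have hsur : Function.Surjective π := QuotientGroup.mk'_surjective N
  have hbot : (⊤ : Subgroup (G ⧸ N)).lowerCentralSeries (n + 1) = ⊥ := by
    rw [← lcs_map_surj π hsur, ← hN]
    exact QuotientGroup.map_mk'_self N
  have hcen : (π q) ^ m ∈ Subgroup.center (G ⧸ N) := by
    have h1 : (π q) ^ m ∈ (⊤ : Subgroup (G ⧸ N)).lowerCentralSeries n := by
      rw [← map_pow, ← lcs_map_surj π hsur n]
      exact mem_map_of_mem _ hq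
    rw [Subgroup.mem_center_iff]
    intro w
    have h2 : ⁅(π q) ^ m, w⁆ ∈ (⊤ : Subgroup (G ⧸ N)).lowerCentralSeries (n + 1) := by
      rw [lcs_succ_eq]
      exact commutator_mem_commutator h1 (mem_top w)
    rw [hbot] at h2
    exact (commutatorElement_eq_one_iff_mul_comm.mp (by simpa using h2)).symm
  obtain ⟨j, hj, hcomm⟩ := comm_torsion_of_pow_central hbot hm hcen (π g)
  refine ⟨j, hj, ?_⟩
  have h3 : π (⁅q, g⁆ ^ j) = 1 := by
    rw [map_pow, map_commutatorElement]
    exact hcomm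
  exact (QuotientGroup.eq_one_iff _).mp h3

/-- The "root subgroup" of elements with a power in `γ_n`. -/
private def rootSG (G : Type u) [Group G] (n : ℕ) : Subgroup G where
  carrier := {x : G | ∃ k : ℕ, 1 ≤ k ∧ x ^ k ∈ (⊤ : Subgroup G).lowerCentralSeries n}
  one_mem' := ⟨1, le_refl 1, by simpa using one_mem ((⊤ : Subgroup G).lowerCentralSeries n)⟩
  inv_mem' := by rintro x ⟨k, hk, h⟩; exact ⟨k, hk, by rw [inv_pow]; exact inv_mem h⟩
  mul_mem' := by
    rintro a b ⟨s, hs, hsa⟩ ⟨t, ht, htb⟩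
    set N := (⊤ : Subgroup G).lowerCentralSeries n with hNdef
    let π := QuotientGroup.mk' N
    have hsur : Function.Surjective π := QuotientGroup.mk'_surjective N
    have hbot : (⊤ : Subgroup (G ⧸ N)).lowerCentralSeries n = ⊥ := by
      rw [← lcs_map_surj π hsur, ← hNdef]
      exact QuotientGroup.map_mk'_self N
    have ha' : ∃ s' : ℕ, 1 ≤ s' ∧ (π a) ^ s' = 1 :=
      ⟨s, hs, by rw [← map_pow]; exact (QuotientGroup.eq_one_iff _).mpr hsa⟩
    have hb' : ∃ t' : ℕ, 1 ≤ t' ∧ (π b) ^ t' = 1 :=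
      ⟨t, ht, by rw [← map_pow]; exact (QuotientGroup.eq_one_iff _).mpr htb⟩
    obtain ⟨w, hw, hab⟩ := torsion_mul hbot ha' hb'
    refine ⟨w, hw, ?_⟩
    apply (QuotientGroup.eq_one_iff _).mp
    rw [← map_mul, ← map_pow] at hab
    exact hab

end Aux

/-- the inclusion `(⊤ : Subgroup G).lowerCentralSeries n ⊆ Q n` of the ordinary
into the rational lower central series induces an isomorphism
`(G_n/G_{n+1}) ⊗ ℚ ≅ (G_n^ℚ/G_{n+1}^ℚ) ⊗ ℚ`.  For a homomorphism of abelian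
groups, being an isomorphism after `⊗ ℚ` means that its kernel and cokernel
are torsion; this is how the conclusion is phrased here. -/
theorem rationalLowerCentralSeries_tensor_iso (G : Type*) [Group G]
    (Q : ℕ → Subgroup G)
    (h0 : Q 0 = ⊤)
    (hsucc : ∀ n, ∀ g : G,
      g ∈ Q (n + 1) ↔ g ∈ Q n ∧ ∃ k : ℕ, 1 ≤ k ∧ g ^ k ∈ ⁅Q n, (⊤ : Subgroup G)⁆) :
    ∀ n : ℕ,
      -- kernel of (G_n/G_{n+1}) → (Q n/Q (n+1)) is torsion:
      (∀ x ∈ (⊤ : Subgroup G).lowerCentralSeries n, x ∈ Q (n + 1) →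
        ∃ k : ℕ, 1 ≤ k ∧ x ^ k ∈ (⊤ : Subgroup G).lowerCentralSeries (n + 1)) ∧
      -- cokernel of (G_n/G_(n+1)) → (Q n/Q (n+1)) is torsion:
      (∀ x ∈ Q n, ∃ k : ℕ, 1 ≤ k ∧ ∃ y ∈ (⊤ : Subgroup G).lowerCentralSeries n,
        y⁻¹ * x ^ k ∈ Q (n + 1)) := by
  -- Main lemma: every element of `Q n` has a power in `(⊤ : Subgroup G).lowerCentralSeries n`.
  have L : ∀ n : ℕ, ∀ x ∈ Q n, ∃ k : ℕ, 1 ≤ k ∧ x ^ k ∈ (⊤ : Subgroup G).lowerCentralSeries n := by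
    intro n
    induction n with
    | zero => intro x _; exact ⟨1, le_refl 1, by simp⟩
    | succ n ih =>
      intro x hx
      obtain ⟨hxn, k, hk, hxk⟩ := (hsucc n x).mp hx
      have hQR : Q n ≤ rootSG G n := fun y hy => ih y hy
      have hcomm : ⁅Q n, (⊤ : Subgroup G)⁆ ≤ rootSG G (n + 1) := by
        refine le_trans (commutator_mono hQR le_rfl) (commutator_le.mpr ?_)
        rintro a ⟨m, hm, hma⟩ g -
        exact comm_pow_in_lcs hm hma g
      obtain ⟨j, hj, hxkj⟩ := hcomm hxk
      refine ⟨k * j, Nat.one_le_iff_ne_zero.mpr (Nat.mul_ne_zero (by omega) (by omega)), ?_⟩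
      rw [pow_mul]
      exact hxkj
  intro n
  constructor
  · intro x _ hxQ
    exact L (n + 1) x hxQ
  · intro x hx
    obtain ⟨k, hk, hxk⟩ := L n x hx
    exact ⟨k, hk, x ^ k, hxk, by rw [inv_mul_cancel]; exact (Q (n + 1)).one_mem⟩
end

section
/- Let G be a rational group (all n-th power maps bijective) and M a G-module. Then M is equivariantly rational (i.e., multiplication by 1 + g + g² + ⋯ + g^{n-1} is a bijection M → M for every g ∈ G and n ≥ 1) if and only if the semidirect product G ⋉ M is a rational group. -/
/-- The action of `G` on `M` as a homomorphism `G →* MulAut (Multiplicative M)`,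
used to form the semidirect product `G ⋉ M`. -/
def actAut (G M : Type*) [Group G] [AddCommGroup M] [DistribMulAction G M] :
    G →* MulAut (Multiplicative M) where
  toFun g := AddEquiv.toMultiplicative (DistribMulAction.toAddEquiv M g)
  map_one' := by ext m; simp [MulAut.one_def]
  map_mul' g h := by ext m; simp [MulAut.mul_def, mul_smul]

lemma actAut_apply (G M : Type*) [Group G] [AddCommGroup M] [DistribMulAction G M]
    (g : G) (m : Multiplicative M) :
    actAut G M g m = Multiplicative.ofAdd (g • m.toAdd) := rfl

lemma sdp_pow_right (G M : Type*) [Group G] [AddCommGroup M] [DistribMulAction G M]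
    (x : SemidirectProduct (Multiplicative M) G (actAut G M)) (n : ℕ) :
    (x ^ n).right = x.right ^ n := by
  induction n with
  | zero => simp
  | succ n ih => rw [pow_succ, pow_succ, SemidirectProduct.mul_right, ih]

lemma sdp_pow_left (G M : Type*) [Group G] [AddCommGroup M] [DistribMulAction G M]
    (x : SemidirectProduct (Multiplicative M) G (actAut G M)) (n : ℕ) :
    (x ^ n).left =
      Multiplicative.ofAdd (∑ i ∈ Finset.range n, (x.right ^ i) • x.left.toAdd) := by
  induction n with
  | zero => simp
  | succ n ih =>
    rw [pow_succ', SemidirectProduct.mul_left, ih, actAut_apply, Finset.sum_range_succ',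
      pow_zero, one_smul]
    have : (x.right :G) • ∑ i ∈ Finset.range n, (x.right ^ i) • x.left.toAdd
        = ∑ i ∈ Finset.range n, (x.right ^ (i + 1)) • x.left.toAdd := by
      rw [Finset.smul_sum]
      exact Finset.sum_congr rfl fun i _ => by rw [smul_smul, ← pow_succ']
    rw [toAdd_ofAdd, this, add_comm]
    rfl

/-- for a rational group `G` and a `G`-module `M`, the module
`M` is equivariantly rational (multiplication by `1 + g + ⋯ + g^{n-1}` is a
bijection on `M` for all `g ∈ G`, `n ≥ 1`) iff the semidirect product
`G ⋉ M` is a rational group. -/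
theorem equivariantlyRational_iff_semidirect_rational (G M : Type*) [Group G]
    [AddCommGroup M] [DistribMulAction G M]
    (hG : ∀ n : ℕ, 1 ≤ n → Function.Bijective fun g : G => g ^ n) :
    (∀ g : G, ∀ n : ℕ, 1 ≤ n →
        Function.Bijective fun m : M => ∑ i ∈ Finset.range n, (g ^ i) • m) ↔
      (∀ n : ℕ, 1 ≤ n →
        Function.Bijective
          fun x : SemidirectProduct (Multiplicative M) G (actAut G M) => x ^ n) := by
  constructor
  · intro hM n hn
    constructor
    · intro x y hxy
      simp only at hxy
      have hr : x.right = y.right := (hG n hn).1 (by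
        simpa [sdp_pow_right] using congrArg SemidirectProduct.right hxy)
      have hl := congrArg SemidirectProduct.left hxy
      rw [sdp_pow_left, sdp_pow_left, hr] at hl
      have : ∑ i ∈ Finset.range n, (y.right ^ i) • x.left.toAdd
          = ∑ i ∈ Finset.range n, (y.right ^ i) • y.left.toAdd :=
        Multiplicative.ofAdd.injective hl
      have hl' : x.left = y.left := Multiplicative.toAdd.injective ((hM y.right n hn).1 this)
      exact SemidirectProduct.ext hl' hr
    · intro z
      obtain ⟨g, hg⟩ := (hG n hn).2 z.right
      obtain ⟨m, hm⟩ := (hM g n hn).2 z.left.toAdd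
      refine ⟨⟨Multiplicative.ofAdd m, g⟩, ?_⟩
      refine SemidirectProduct.ext ?_ ?_
      · rw [sdp_pow_left]; simp only [toAdd_ofAdd]; simp only at hm; rw [hm]; simp
      · simpa [sdp_pow_right] using hg
  · intro hS g n hn
    constructor
    · intro m m' hmm
      simp only at hmm
      have : (⟨Multiplicative.ofAdd m, g⟩ :
          SemidirectProduct (Multiplicative M) G (actAut G M)) ^ n
          = (⟨Multiplicative.ofAdd m', g⟩ :
          SemidirectProduct (Multiplicative M) G (actAut G M)) ^ n := by
        refine SemidirectProduct.ext ?_ ?_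
        · rw [sdp_pow_left, sdp_pow_left]; simp only [toAdd_ofAdd]; rw [hmm]
        · rw [sdp_pow_right, sdp_pow_right]
      have := (hS n hn).1 this
      simpa using congrArg (fun x : SemidirectProduct (Multiplicative M) G (actAut G M)
        => x.left.toAdd) this
    · intro m'
      obtain ⟨x, hx⟩ := (hS n hn).2 ⟨Multiplicative.ofAdd m', g ^ n⟩
      have hr : x.right = g := (hG n hn).1 (by
        simpa [sdp_pow_right] using congrArg SemidirectProduct.right hx)
      refine ⟨x.left.toAdd, ?_⟩
      have hl := congrArg SemidirectProduct.left hx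
      rw [sdp_pow_left, hr] at hl
      simpa using congrArg Multiplicative.toAdd hl
end
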